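/- arXiv:2512.14466 — 4 statements merged into one kernel-verified Lean document; each statement's English description precedes it below -/
import Mathlib

section
/- Let G be a game position on a finite digraph with gray (entailing) nodes whose options are already assigned. Then the set C(G) of covered values of G (the set of k with Cr(G,k) = true) is either finite or of the form ℤ≥0 \ F for a finite set F. -/
/-- A game position with all options previously assigned: a white node
carries its (already assigned) Grundy value; a gray (entailing) node
carries its list of options. -/
inductive EGame where
  | white (g : ℕ)
  | gray (opts : List EGame)

/-- `crOk G' k` says that option `G'` is satisfactory in the definition of
`Cr`: a white option with Grundy value `≠ k`, or a gray option with
`Cr G' k = false`.  (For a gray `G'`, `Cr G' k = isEmpty ∨ all crOk`.) -/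
def crOk : EGame → ℕ → Bool
  | .white g, k => g != k
  | .gray opts, k => !(opts.isEmpty || opts.attach.all fun ⟨G', _⟩ => crOk G' k)
termination_by G _ => sizeOf G
decreasing_by
  rename_i hG'
  have := List.sizeOf_lt_of_mem hG'
  simp only [EGame.gray.sizeOf_spec]
  omega

/-- The boolean function `Cr` of Algorithm 3: for a gray node,
`Cr (gray opts) k = true` iff the node is terminal (`opts = []`), or every
option `G'` is a white node with Grundy value `≠ k` or a gray node with
`Cr G' k = false`. -/
def Cr : EGame → ℕ → Bool
  | .white _, _ => false
  | .gray opts, k => opts.isEmpty || opts.attach.all fun ⟨G', _⟩ => crOk G' k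

/-- The set of covered values of a game. -/
def covered (G : EGame) : Set ℕ := {k | Cr G k = true}

/-!
Sets of naturals that are finite or cofinite are closed under complement and finite
intersection. For a gray node, `{k | crOk G k}` is the complement of `C(G)`, and `C(G)` is
either everything (terminal node) or the intersection of the sets `{k | crOk G' k}` over the
options, the one for a white option of value `g` being the cofinite set `ℕ \ {g}`; induction
on the game does the rest.
-/

def Set.FiniteOrCofinite {α : Type*} (s : Set α) : Prop := s.Finite ∨ sᶜ.Finite

namespace Set.FiniteOrCofinite

variable {α : Type*}

theorem compl {s : Set α} (h : s.FiniteOrCofinite) : sᶜ.FiniteOrCofinite := by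
  rw [FiniteOrCofinite, compl_compl]
  exact h.symm

/-- If some member is finite the intersection is finite; otherwise all members are cofinite,
and the cofinite filter is closed under finite intersections. -/
theorem biInter {ι : Type*} {I : Set ι} (hI : I.Finite) {t : ι → Set α}
    (h : ∀ i ∈ I, (t i).FiniteOrCofinite) : (⋂ i ∈ I, t i).FiniteOrCofinite := by
  by_cases hfin : ∃ i ∈ I, (t i).Finite
  · obtain ⟨i, hi, hti⟩ := hfin
    exact Or.inl (hti.subset (biInter_subset_of_mem hi))
  · push Not at hfin
    have hcof : ∀ i ∈ I, t i ∈ Filter.cofinite := fun i hi =>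
      Filter.mem_cofinite.2 ((h i hi).resolve_left (hfin i hi))
    exact Or.inr (Filter.mem_cofinite.1 ((Filter.biInter_mem hI).2 hcof))

end Set.FiniteOrCofinite

theorem crOk_gray (opts : List EGame) (k : ℕ) : crOk (.gray opts) k = !Cr (.gray opts) k := by
  rw [crOk, Cr]

theorem covered_gray_of_ne_nil {opts : List EGame} (hopts : opts ≠ []) :
    covered (.gray opts) = ⋂ G ∈ {G | G ∈ opts}, {k | crOk G k = true} := by
  ext k
  simp [covered, Cr, hopts]

theorem finiteOrCofinite_covered_gray (opts : List EGame)
    (h : ∀ G ∈ opts, {k | crOk G k = true}.FiniteOrCofinite) :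
    (covered (.gray opts)).FiniteOrCofinite := by
  rcases eq_or_ne opts [] with rfl | hopts
  · exact Or.inr (by simp [covered, Cr])
  · rw [covered_gray_of_ne_nil hopts]
    exact .biInter opts.finite_toSet h

theorem finiteOrCofinite_setOf_crOk : ∀ G : EGame, {k | crOk G k = true}.FiniteOrCofinite
  | .white g => Or.inr <| (Set.finite_singleton g).subset fun k hk =>
      (by simpa [crOk] using hk : g = k).symm
  | .gray opts => by
    have hcompl : {k | crOk (.gray opts) k = true} = (covered (.gray opts))ᶜ := by
      ext k
      simp [crOk_gray, covered]
    rw [hcompl]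
    exact (finiteOrCofinite_covered_gray opts fun G _ => finiteOrCofinite_setOf_crOk G).compl
termination_by G => sizeOf G
decreasing_by
  have := List.sizeOf_lt_of_mem ‹G ∈ opts›
  simp only [EGame.gray.sizeOf_spec]
  omega

/-- Theorem 8 (part 1): for a gray node `G` whose options are previously
assigned, the covered-value set `C(G)` is either finite or of the form
`ℤ≥0 \ F` for a finite set `F`. -/
theorem covered_finite_or_cofinite (opts : List EGame) :
    (covered (EGame.gray opts)).Finite ∨
      ∃ F : Set ℕ, F.Finite ∧ covered (EGame.gray opts) = Set.univ \ F := by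
  rcases finiteOrCofinite_covered_gray opts fun G _ => finiteOrCofinite_setOf_crOk G with h | h
  · exact Or.inl h
  · exact Or.inr ⟨_, h, by rw [← Set.compl_eq_univ_sdiff, compl_compl]⟩
end

section
/- Let G be a gray-node game whose options are previously assigned. If some gray option G' of G has an infinite (cofinite) covered-value set ℤ≥0 \ F', and l is the maximum of the union of the finite complements F₁,…,Fⱼ over all gray options with cofinite covered-value sets, then Cr(G,k) = false for all k > l. -/
theorem Cr_gray_eq_false_of_mem {opts : List EGame} {G' : EGame} {k : ℕ} (hmem : G' ∈ opts)
    (hok : crOk G' k = false) : Cr (.gray opts) k = false := by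
  simp only [Cr, Bool.or_eq_false_iff, List.isEmpty_eq_false_iff, List.all_subtype,
    List.unattach_attach, List.all_eq_false, Bool.not_eq_true]
  exact ⟨List.ne_nil_of_mem hmem, G', hmem, hok⟩

theorem Cr_eq_true_of_lt {G' : EGame} {l : ℕ} (hl : ∀ k, Cr G' k = false → k ≤ l) {k : ℕ}
    (hk : l < k) : Cr G' k = true :=
  Bool.eq_true_of_not_eq_false fun h => (hl k h).not_gt hk

/-- Theorem 8, first bullet: if some gray option of `G = gray opts` has a
cofinite covered-value set `ℤ≥0 \ F'`, and `l` bounds (as the maximum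
does) the union of the finite complements of the covered-value sets over
all such gray options, then `Cr(G, k) = false` for all `k > l`. -/
theorem Cr_false_of_gt (opts : List EGame) (l : ℕ)
    (hex : ∃ G' ∈ opts, (∃ o, G' = EGame.gray o) ∧ ((covered G')ᶜ).Finite)
    (hl : ∀ G' ∈ opts, (∃ o, G' = EGame.gray o) → ((covered G')ᶜ).Finite →
      ∀ k, Cr G' k = false → k ≤ l) :
    ∀ k, l < k → Cr (EGame.gray opts) k = false := by
  obtain ⟨_, hmem, ⟨o, rfl⟩, hfin⟩ := hex
  intro k hk
  have hcov : Cr (.gray o) k = true := Cr_eq_true_of_lt (hl _ hmem ⟨o, rfl⟩ hfin) hk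
  exact Cr_gray_eq_false_of_mem hmem (by rw [crOk_gray, hcov]; rfl)
end

section
/- Let G be a gray-node game whose options are previously assigned, such that every gray option of G has a finite covered-value set. Let l be the least nonnegative integer exceeding all integers in the union of the covered-value sets of gray options of G together with all Grundy values of white options of G. Then Cr(G,k) = true for all k ≥ l. -/
theorem crOk_white_iff (g k : ℕ) : crOk (.white g) k = true ↔ g ≠ k := by
  simp [crOk]

theorem crOk_gray_iff (opts : List EGame) (k : ℕ) :
    crOk (.gray opts) k = true ↔ Cr (.gray opts) k = false := by
  rw [crOk, Cr, Bool.not_eq_true']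

theorem Cr_gray_of_forall_crOk (opts : List EGame) (k : ℕ)
    (h : ∀ G' ∈ opts, crOk G' k = true) : Cr (.gray opts) k = true := by
  rw [Cr, Bool.or_eq_true, List.all_eq_true]
  exact Or.inr fun ⟨G', hG'⟩ _ => h G' hG'

theorem Cr_true_of_ge_general (opts : List EGame) (l : ℕ)
    (hl₁ : ∀ G' ∈ opts, (∃ o, G' = EGame.gray o) → ∀ k, Cr G' k = true → k < l)
    (hl₂ : ∀ g, EGame.white g ∈ opts → g < l) :
    ∀ k, l ≤ k → Cr (EGame.gray opts) k = true := by
  intro k hk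
  refine Cr_gray_of_forall_crOk opts k fun G' hG' => ?_
  cases G' with
  | white g => exact (crOk_white_iff g k).2 (hl₂ g hG' |>.trans_le hk).ne
  | gray o =>
    rw [crOk_gray_iff, Bool.eq_false_iff]
    exact fun hCr => (hl₁ _ hG' ⟨o, rfl⟩ k hCr).not_ge hk

/-- Theorem 8, second bullet: if every gray option of `G = gray opts` has a
finite covered-value set, and `l` is a nonnegative integer exceeding all
integers in the union of the covered-value sets of the gray options together
with all Grundy values of the white options, then `Cr(G, k) = true` for all
`k ≥ l`. -/
theorem Cr_true_of_ge (opts : List EGame) (l : ℕ)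
    (hfin : ∀ G' ∈ opts, (∃ o, G' = EGame.gray o) → (covered G').Finite)
    (hl₁ : ∀ G' ∈ opts, (∃ o, G' = EGame.gray o) → ∀ k, Cr G' k = true → k < l)
    (hl₂ : ∀ g, EGame.white g ∈ opts → g < l) :
    ∀ k, l ≤ k → Cr (EGame.gray opts) k = true :=
  Cr_true_of_ge_general opts l hl₁ hl₂
end

section
/- For cyclic impartial games (finite digraph possibly with cycles, no entailing moves): if G has Grundy value m < ∞ and H has Grundy value ∞_D (H lies in a cyclic zone with exit values D), then the disjunctive sum G + H has Grundy value ∞_{m ⊕ D}; consequently G + H is an N-position if and only if m ∈ D. -/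
/-!
The Smith–Fraenkel–Perl labeling is pinned down by four local conditions (no option repeats a
finite label, every smaller label is reachable, every option not labeled below `m` reverts to `m`,
and every `∞` position has an `∞` option from which the mex of its exits is unreachable), together
with a counter function that decreases along the moves these conditions provide: two labelings
satisfying them coincide, by induction on the label and then on the counter.

On `G + H` the labeling `(x, y) ↦ γ x ⊕ γ y`, with `∞` absorbing, satisfies the conditions for the
counter `(a + b) K + c x + c y`; when a move lowers one component's label while raising the xor,
the reverting answer lowers the other component's label, so `a + b` drops. The algorithm's
labeling of `G + H` is therefore the xor labeling, the exits of `(x, y)` are `m ⊕ D`, and `(x, y)`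
is an N-position iff some option is labeled `0`, i.e. iff `m ∈ D`.
-/

/-- The minimum excluded value of a set of nonnegative integers. -/
noncomputable def mex (S : Set ℕ) : ℕ := sInf {n | n ∉ S}

/-- A cyclic impartial game board: a finite digraph, possibly with cycles.
`adj x y` means `(V, y)` is an option of `(V, x)`. -/
structure CycGame where
  V : Type
  finite : Finite V
  adj : V → V → Prop

namespace CycGame

open Classical in
/-- One step of the Smith–Fraenkel–Perl labeling algorithm (Algorithm 2):
an unassigned node `x` receives the value `m = mex` of the assigned values
of its options, provided every option that is unassigned or assigned a
value greater than `m` reverts, i.e. has an option assigned `m`.  Here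
`none` plays the role of the symbol `∞`. -/
noncomputable def step (G : CycGame) (g : G.V → Option ℕ) : G.V → Option ℕ :=
  fun x =>
    match g x with
    | some m => some m
    | none =>
      let m := mex {k | ∃ y, G.adj x y ∧ g y = some k}
      if ∀ y, G.adj x y → (∀ k, g y = some k → m < k) →
          ∃ z, G.adj y z ∧ g z = some m then
        some m
      else none

/-- The Smith–Fraenkel–Perl Grundy labeling: iterate the algorithm (from the
all-`∞` initialization) until it stabilizes; `Nat.card G.V + 1` steps
suffice.  `smith G x = some m` means `(V, x)` has finite Grundy value `m`;
`smith G x = none` means `x` lies in a cyclic zone (value `∞_D`). -/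
noncomputable def smith (G : CycGame) : G.V → Option ℕ :=
  (G.step)^[Nat.card G.V + 1] fun _ => none

/-- The exit set `D` of a node: the finite Grundy values of its options.
For a node in a cyclic zone this is the subscript in `∞_D`. -/
def exits (G : CycGame) (x : G.V) : Set ℕ :=
  {a | ∃ y, G.adj x y ∧ G.smith y = some a}

/-- `x` is an N-position: the next player can force a win, i.e. there is a
move to a position all of whose options are N-positions (a P-position). -/
inductive NPos (G : CycGame) : G.V → Prop where
  | intro (x y : G.V) (h : G.adj x y) (hy : ∀ z, G.adj y z → NPos G z) :
      NPos G x

/-- `x` is a P-position: it is terminal or all of its options are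
N-positions. -/
def PPos (G : CycGame) (x : G.V) : Prop := ∀ y, G.adj x y → G.NPos y

/-- `x` is a Draw: neither player can force a win (the game is tied by
infinite play). -/
def Draw (G : CycGame) (x : G.V) : Prop := ¬ G.NPos x ∧ ¬ G.PPos x

/-- The disjunctive sum of two cyclic impartial games: a move is a move in
exactly one component. -/
def sum (G H : CycGame) : CycGame where
  V := G.V × H.V
  finite := by have := G.finite; have := H.finite; exact inferInstance
  adj := fun p q =>
    (G.adj p.1 q.1 ∧ p.2 = q.2) ∨ (H.adj p.2 q.2 ∧ p.1 = q.1)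

end CycGame

theorem mem_of_lt_mex {S : Set ℕ} {k : ℕ} (h : k < mex S) : k ∈ S := by
  by_contra hk
  exact (Nat.sInf_le hk).not_gt h

theorem mex_le_of_notMem {S : Set ℕ} {k : ℕ} (h : k ∉ S) : mex S ≤ k := Nat.sInf_le h

theorem mex_notMem {S : Set ℕ} (hS : S.Finite) : mex S ∉ S :=
  Nat.sInf_mem hS.infinite_compl.nonempty

theorem mex_eq_of_forall_lt_mem {S : Set ℕ} {m : ℕ} (hS : S.Finite) (hlt : ∀ k < m, k ∈ S)
    (hm : m ∉ S) : mex S = m :=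
  le_antisymm (mex_le_of_notMem hm) (not_lt.1 fun h => mex_notMem hS (hlt _ h))

theorem xor_mex_image_eq_or_lt (a : ℕ) {D : Set ℕ} (hD : D.Finite) :
    a ^^^ mex ((a ^^^ ·) '' D) = mex D ∨ mex ((a ^^^ ·) '' D) ^^^ mex D < a := by
  set μ := mex ((a ^^^ ·) '' D)
  have hμ : a ^^^ μ ∉ D := fun h => mex_notMem (hD.image _) ⟨_, h, Nat.xor_xor_cancel_left a μ⟩
  rcases (mex_le_of_notMem hμ).eq_or_lt with h | h
  · exact .inl h.symm
  have hμ_lt : μ < a ^^^ mex D := by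
    refine lt_of_le_of_ne (not_lt.1 fun h' => mex_notMem hD ?_) fun h' => h.ne ?_
    · obtain ⟨d, hd, hd'⟩ := mem_of_lt_mex h'
      rwa [← Nat.xor_right_inj.1 hd']
    · rw [h', Nat.xor_xor_cancel_left]
  refine .inr ((Nat.lt_xor_cases hμ_lt).resolve_right fun h' => ?_)
  rw [Nat.xor_comm] at h'
  omega

namespace CycGame

def exitsOf (G : CycGame) (γ : G.V → Option ℕ) (x : G.V) : Set ℕ :=
  {k | ∃ y, G.adj x y ∧ γ y = some k}

theorem exitsOf_finite (G : CycGame) (γ : G.V → Option ℕ) (x : G.V) : (G.exitsOf γ x).Finite := by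
  have := G.finite
  refine (Set.finite_range fun y => (γ y).getD 0).subset ?_
  rintro k ⟨y, -, hy⟩
  exact ⟨y, by simp [hy]⟩

/-- A γ-function in the sense of Smith–Fraenkel–Perl, with counter function `c`. -/
structure IsGrundyLabeling (G : CycGame) (γ : G.V → Option ℕ) (c : G.V → ℕ) : Prop where
  ne_of_adj : ∀ ⦃x y m⦄, γ x = some m → G.adj x y → γ y ≠ some m
  exists_adj_lt : ∀ ⦃x m k⦄, γ x = some m → k < m → ∃ y, G.adj x y ∧ γ y = some k ∧ c y < c x
  exists_revert : ∀ ⦃x y m⦄, γ x = some m → G.adj x y → (∀ k, γ y = some k → m < k) →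
    ∃ z, G.adj y z ∧ γ z = some m ∧ c z < c x
  exists_escape : ∀ ⦃x⦄, γ x = none →
    ∃ y, G.adj x y ∧ γ y = none ∧ ∀ z, G.adj y z → γ z ≠ some (mex (G.exitsOf γ x))

namespace IsGrundyLabeling

variable {G : CycGame} {γ γ' : G.V → Option ℕ} {c c' : G.V → ℕ}

theorem lt_or_forall_gt (h : G.IsGrundyLabeling γ c) {x y : G.V} {m : ℕ} (hx : γ x = some m)
    (hxy : G.adj x y) : (∃ k < m, γ y = some k) ∨ ∀ k, γ y = some k → m < k := by
  cases hy : γ y with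
  | none => simp
  | some k =>
    rcases lt_trichotomy k m with hk | rfl | hk
    · exact .inl ⟨k, hk, rfl⟩
    · exact absurd hy (h.ne_of_adj hx hxy)
    · exact .inr fun k' hk' => Option.some_injective _ hk' ▸ hk

theorem eq_some_of_forall_lt (h : G.IsGrundyLabeling γ c) (h' : G.IsGrundyLabeling γ' c')
    {x : G.V} {m : ℕ} (hx : γ x = some m)
    (ih_lt : ∀ y k, k < m → γ y = some k → γ' y = some k)
    (ih_c : ∀ y, c y < c x → γ y = some m → γ' y = some m) : γ' x = some m := by
  have revert : ∀ y, G.adj x y → (∀ k, γ y = some k → m < k) →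
      ∃ z, G.adj y z ∧ γ' z = some m := by
    intro y hxy hy
    obtain ⟨z, hyz, hz, hcz⟩ := h.exists_revert hx hxy hy
    exact ⟨z, hyz, ih_c z hcz hz⟩
  have notMem : m ∉ G.exitsOf γ' x := by
    rintro ⟨y, hxy, hy⟩
    rcases h.lt_or_forall_gt hx hxy with ⟨k, hk, hyk⟩ | hgt
    · rw [ih_lt y k hk hyk] at hy
      exact hk.ne (Option.some_injective _ hy)
    · obtain ⟨z, hyz, hz⟩ := revert y hxy hgt
      exact h'.ne_of_adj hy hyz hz
  have lt_mem : ∀ k < m, k ∈ G.exitsOf γ' x := by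
    intro k hk
    obtain ⟨y, hxy, hy, -⟩ := h.exists_adj_lt hx hk
    exact ⟨y, hxy, ih_lt y k hk hy⟩
  cases hx' : γ' x with
  | none =>
    obtain ⟨y, hxy, hy, hy_ne⟩ := h'.exists_escape hx'
    rw [mex_eq_of_forall_lt_mem (G.exitsOf_finite γ' x) lt_mem notMem] at hy_ne
    rcases h.lt_or_forall_gt hx hxy with ⟨k, hk, hyk⟩ | hgt
    · rw [ih_lt y k hk hyk] at hy
      cases hy
    · obtain ⟨z, hyz, hz⟩ := revert y hxy hgt
      exact absurd hz (hy_ne z hyz)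
  | some m' =>
    rcases lt_trichotomy m' m with hlt | rfl | hgt
    · obtain ⟨y, hxy, hy⟩ := lt_mem m' hlt
      exact absurd hy (h'.ne_of_adj hx' hxy)
    · rfl
    · obtain ⟨y, hxy, hy, -⟩ := h'.exists_adj_lt hx' hgt
      exact absurd ⟨y, hxy, hy⟩ notMem

theorem eq_some_of_eq_some (h : G.IsGrundyLabeling γ c) (h' : G.IsGrundyLabeling γ' c')
    {x : G.V} {m : ℕ} (hx : γ x = some m) : γ' x = some m := by
  induction m using Nat.strong_induction_on generalizing x with
  | _ m ih_lt =>
  induction x using (measure c).wf.induction with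
  | _ x ih_c =>
  exact h.eq_some_of_forall_lt h' hx (fun y k hk hy => ih_lt k hk hy) fun y hy hym => ih_c y hy hym

theorem unique (h : G.IsGrundyLabeling γ c) (h' : G.IsGrundyLabeling γ' c') : γ = γ' :=
  funext fun _ => Option.ext fun _ => ⟨h.eq_some_of_eq_some h', h'.eq_some_of_eq_some h⟩

theorem pPos_of_eq_zero (h : G.IsGrundyLabeling γ c) {x : G.V} (hx : γ x = some 0) :
    G.PPos x := by
  induction x using (measure c).wf.induction with
  | _ x ih =>
  intro y hxy
  have hy : ∀ k, γ y = some k → 0 < k := fun k hk =>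
    Nat.pos_of_ne_zero (by rintro rfl; exact h.ne_of_adj hx hxy hk)
  obtain ⟨z, hyz, hz, hcz⟩ := h.exists_revert hx hxy hy
  exact .intro y z hyz (ih z hcz hz)

theorem nPos_iff (h : G.IsGrundyLabeling γ c) {x : G.V} : G.NPos x ↔ 0 ∈ G.exitsOf γ x := by
  refine ⟨fun hx => ?_, fun ⟨y, hxy, hy⟩ => .intro x y hxy (h.pPos_of_eq_zero hy)⟩
  induction hx with
  | intro x y hxy _ ih =>
  have ne_zero : ∀ z, G.adj y z → γ z ≠ some 0 := fun z hyz hz => by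
    obtain ⟨w, hzw, hw⟩ := ih z hyz
    exact h.ne_of_adj hz hzw hw
  refine ⟨y, hxy, ?_⟩
  cases hy : γ y with
  | some k =>
    obtain rfl | hk := Nat.eq_zero_or_pos k
    · rfl
    · obtain ⟨z, hyz, hz, -⟩ := h.exists_adj_lt hy hk
      exact absurd hz (ne_zero z hyz)
  | none =>
    obtain ⟨z, hyz, -, hz⟩ := h.exists_escape hy
    have hmex : mex (G.exitsOf γ y) = 0 :=
      Nat.le_zero.1 (mex_le_of_notMem fun ⟨z, hyz, hz⟩ => ne_zero z hyz hz)
    obtain ⟨w, hzw, hw⟩ := ih z hyz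
    exact (hz w hzw (hmex ▸ hw)).elim

end IsGrundyLabeling

end CycGame

namespace CycGame

variable (G : CycGame)

noncomputable def iter (i : ℕ) : G.V → Option ℕ :=
  G.step^[i] fun _ => none

theorem iter_succ (i : ℕ) : G.iter (i + 1) = G.step (G.iter i) :=
  Function.iterate_succ_apply' _ _ _

variable {G}

theorem step_of_eq_some {g : G.V → Option ℕ} {x : G.V} {m : ℕ} (h : g x = some m) :
    G.step g x = some m := by
  simp only [step, h]

theorem step_eq_some_of_eq_none {g : G.V → Option ℕ} {x : G.V} {m : ℕ} (h0 : g x = none)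
    (h : G.step g x = some m) :
    m = mex (G.exitsOf g x) ∧
      ∀ y, G.adj x y → (∀ k, g y = some k → m < k) → ∃ z, G.adj y z ∧ g z = some m := by
  simp only [step, h0] at h
  split_ifs at h with hrev
  cases h
  exact ⟨rfl, hrev⟩

theorem iter_mono {i j : ℕ} (hij : i ≤ j) {x : G.V} {m : ℕ} (h : G.iter i x = some m) :
    G.iter j x = some m := by
  induction j, hij using Nat.le_induction with
  | base => exact h
  | succ j _ ih => rw [iter_succ]; exact step_of_eq_some ih

theorem iter_succ_eq_of_ncard_le {i : ℕ}
    (h : {x | (G.iter (i + 1) x).isSome}.ncard ≤ {x | (G.iter i x).isSome}.ncard) :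
    G.iter (i + 1) = G.iter i := by
  have := G.finite
  have hsub : {x | (G.iter i x).isSome} ⊆ {x | (G.iter (i + 1) x).isSome} := fun x hx => by
    obtain ⟨m, hm⟩ := Option.isSome_iff_exists.1 hx
    simp [iter_mono (Nat.le_succ i) hm]
  have heq := Set.eq_of_subset_of_ncard_le hsub h
  funext x
  cases hx : G.iter i x with
  | some m => exact iter_mono (Nat.le_succ i) hx
  | none =>
    have : x ∉ {x | (G.iter (i + 1) x).isSome} := by simp [← heq, hx]
    simpa using this

theorem exists_isFixedPt_iter (G : CycGame) :
    ∃ i ≤ Nat.card G.V, Function.IsFixedPt G.step (G.iter i) := by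
  have := G.finite
  by_contra! hne
  let n i := {x | (G.iter i x).isSome}.ncard
  -- while no fixed point is reached, every step labels a new position
  have grow : ∀ i ≤ Nat.card G.V + 1, i ≤ n i := by
    intro i
    induction i with
    | zero => simp
    | succ i ih =>
      intro hi
      have : n i < n (i + 1) := not_le.1 fun hle =>
        hne i (by omega) ((G.iter_succ i).symm.trans (iter_succ_eq_of_ncard_le hle))
      have := ih (by omega)
      omega
  have := (grow _ le_rfl).trans (Set.ncard_le_card _)
  omega

theorem iter_eq_smith {i : ℕ} (hi : Nat.card G.V ≤ i) : G.iter i = G.smith := by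
  obtain ⟨j, hj, hfix⟩ := G.exists_isFixedPt_iter
  have stable : ∀ i, j ≤ i → G.iter i = G.iter j := fun i hji => by
    obtain ⟨n, rfl⟩ := Nat.exists_eq_add_of_le hji
    rw [iter, add_comm, Function.iterate_add_apply]
    exact hfix.iterate n
  exact (stable i (by omega)).trans (stable _ (by omega)).symm

theorem step_smith (G : CycGame) : G.step G.smith = G.smith := by
  have h := G.iter_succ (Nat.card G.V)
  rw [iter_eq_smith le_rfl, iter_eq_smith (Nat.le_succ _)] at h
  exact h.symm

theorem smith_eq_of_iter {i : ℕ} {x : G.V} {m : ℕ} (h : G.iter i x = some m) :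
    G.smith x = some m := by
  rw [← iter_eq_smith (le_max_right i (Nat.card G.V))]
  exact iter_mono (le_max_left _ _) h

variable (G) in
/-- `0` for positions that are never labeled. -/
noncomputable def stage (x : G.V) : ℕ :=
  sInf {i | (G.iter i x).isSome}

theorem stage_le {i : ℕ} {x : G.V} {m : ℕ} (h : G.iter i x = some m) : G.stage x ≤ i :=
  Nat.sInf_le (by simp [h])

theorem exists_stage {x : G.V} {m : ℕ} (hx : G.smith x = some m) :
    ∃ i, G.stage x = i + 1 ∧ G.iter (i + 1) x = some m ∧ m = mex (G.exitsOf (G.iter i) x) ∧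
      ∀ y, G.adj x y → (∀ k, G.iter i y = some k → m < k) →
        ∃ z, G.adj y z ∧ G.iter i z = some m := by
  have hne : {i | (G.iter i x).isSome}.Nonempty := ⟨Nat.card G.V + 1, by
    simp [show G.iter (Nat.card G.V + 1) x = some m from hx]⟩
  obtain ⟨m', hm'⟩ : ∃ m', G.iter (G.stage x) x = some m' :=
    Option.isSome_iff_exists.1 (Nat.sInf_mem hne)
  obtain rfl : m' = m := Option.some_injective _ ((smith_eq_of_iter hm').symm.trans hx)
  obtain ⟨i, hi⟩ : ∃ i, G.stage x = i + 1 :=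
    Nat.exists_eq_succ_of_ne_zero fun h0 => by
      rw [h0] at hm'
      cases hm'
  have hnone : G.iter i x = none := by
    have hlt : i < G.stage x := by omega
    simpa using Nat.notMem_of_lt_sInf hlt
  rw [hi] at hm'
  exact ⟨i, hi, hm', step_eq_some_of_eq_none hnone (iter_succ G i ▸ hm')⟩

end CycGame

namespace CycGame

variable {G : CycGame}

theorem smith_exists_adj_lt {x : G.V} {m k : ℕ} (hx : G.smith x = some m) (hk : k < m) :
    ∃ y, G.adj x y ∧ G.smith y = some k ∧ G.stage y < G.stage x := by
  obtain ⟨i, hi, -, hm, -⟩ := exists_stage hx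
  obtain ⟨y, hxy, hy⟩ := mem_of_lt_mex (hm ▸ hk)
  exact ⟨y, hxy, smith_eq_of_iter hy, hi ▸ Nat.lt_succ_of_le (stage_le hy)⟩

theorem smith_exists_revert {x y : G.V} {m : ℕ} (hx : G.smith x = some m) (hxy : G.adj x y)
    (hy : ∀ k, G.smith y = some k → m < k) :
    ∃ z, G.adj y z ∧ G.smith z = some m ∧ G.stage z < G.stage x := by
  obtain ⟨i, hi, -, -, hrev⟩ := exists_stage hx
  obtain ⟨z, hyz, hz⟩ := hrev y hxy fun k hk => hy k (smith_eq_of_iter hk)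
  exact ⟨z, hyz, smith_eq_of_iter hz, hi ▸ Nat.lt_succ_of_le (stage_le hz)⟩

theorem smith_ne_of_adj {x y : G.V} {m : ℕ} (hx : G.smith x = some m) (hxy : G.adj x y) :
    G.smith y ≠ some m := by
  intro hy
  obtain ⟨i, -, -, hm, hrev⟩ := exists_stage hx
  cases hyi : G.iter i y with
  | some k =>
    obtain rfl : k = m := Option.some_injective _ ((smith_eq_of_iter hyi).symm.trans hy)
    exact mex_notMem (G.exitsOf_finite _ x) (hm ▸ (⟨y, hxy, hyi⟩ : k ∈ G.exitsOf (G.iter i) x))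
  | none =>
    -- `y` is labeled after `x`, when its option `z` already carries `m`
    obtain ⟨z, hyz, hz⟩ := hrev y hxy (by simp [hyi])
    obtain ⟨j, -, hyj, hm', -⟩ := exists_stage hy
    have hij : i ≤ j := not_lt.1 fun hji => by
      rw [iter_mono hji hyj] at hyi
      cases hyi
    exact mex_notMem (G.exitsOf_finite _ y)
      (hm' ▸ (⟨z, hyz, iter_mono hij hz⟩ : m ∈ G.exitsOf (G.iter j) y))

theorem smith_exists_escape {x : G.V} (hx : G.smith x = none) :
    ∃ y, G.adj x y ∧ G.smith y = none ∧
      ∀ z, G.adj y z → G.smith z ≠ some (mex (G.exitsOf G.smith x)) := by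
  have hfix := congrFun G.step_smith x
  simp only [step, hx] at hfix
  split_ifs at hfix with hrev
  push Not at hrev
  obtain ⟨y, hxy, hgt, hne⟩ := hrev
  refine ⟨y, hxy, ?_, hne⟩
  cases hy : G.smith y with
  | none => rfl
  | some k =>
    obtain ⟨z, hyz, hz, -⟩ := smith_exists_adj_lt hy (hgt k hy)
    exact (hne z hyz hz).elim

variable (G) in
theorem isGrundyLabeling_smith : G.IsGrundyLabeling G.smith G.stage where
  ne_of_adj _ _ _ := smith_ne_of_adj
  exists_adj_lt _ _ _ := smith_exists_adj_lt
  exists_revert _ _ _ := smith_exists_revert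
  exists_escape _ := smith_exists_escape

end CycGame

theorem Nat.mul_add_lt_mul_add {l l' s s' K : ℕ} (hl : l' < l) (hs : s' < K) :
    l' * K + s' < l * K + s :=
  calc l' * K + s' < (l' + 1) * K := by rw [add_one_mul]; omega
    _ ≤ l * K := Nat.mul_le_mul_right K hl
    _ ≤ l * K + s := Nat.le_add_right _ _

namespace CycGame

variable {G H : CycGame}

theorem sum_adj_swap {p q : G.V × H.V} : (H.sum G).adj p.swap q.swap ↔ (G.sum H).adj p q :=
  Or.comm

variable (γG : G.V → Option ℕ) (γH : H.V → Option ℕ) (cG : G.V → ℕ) (cH : H.V → ℕ)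

def sumLabeling : G.V × H.V → Option ℕ :=
  fun p => Option.map₂ (· ^^^ ·) (γG p.1) (γH p.2)

def sumRank (K : ℕ) : G.V × H.V → ℕ :=
  fun p => ((γG p.1).getD 0 + (γH p.2).getD 0) * K + (cG p.1 + cH p.2)

theorem sumLabeling_swap (p : G.V × H.V) : sumLabeling γH γG p.swap = sumLabeling γG γH p := by
  simp only [sumLabeling, Prod.fst_swap, Prod.snd_swap, Option.map₂_swap (· ^^^ ·) (γH p.2),
    Nat.xor_comm]

theorem sumRank_swap (K : ℕ) (p : G.V × H.V) :
    sumRank γH γG cH cG K p.swap = sumRank γG γH cG cH K p := by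
  simp only [sumRank, Prod.fst_swap, Prod.snd_swap, add_comm]

theorem exitsOf_sum_swap (p : G.V × H.V) :
    (H.sum G).exitsOf (sumLabeling γH γG) p.swap = (G.sum H).exitsOf (sumLabeling γG γH) p := by
  ext k
  constructor
  · rintro ⟨q, hpq, hq⟩
    exact ⟨q.swap, sum_adj_swap.1 hpq, (sumLabeling_swap γH γG q).trans hq⟩
  · rintro ⟨q, hpq, hq⟩
    exact ⟨q.swap, sum_adj_swap.2 hpq, (sumLabeling_swap γG γH q).trans hq⟩

variable {γG γH cG cH}

theorem sumLabeling_eq_some_iff {x : G.V} {y : H.V} {c : ℕ} :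
    sumLabeling γG γH (x, y) = some c ↔ ∃ a b, γG x = some a ∧ γH y = some b ∧ a ^^^ b = c := by
  simp [sumLabeling]

theorem sumLabeling_of_eq_some {x : G.V} {y : H.V} {a b : ℕ} (ha : γG x = some a)
    (hb : γH y = some b) : sumLabeling γG γH (x, y) = some (a ^^^ b) := by
  simp [sumLabeling, ha, hb]

theorem sumLabeling_of_snd_eq_none {x : G.V} {y : H.V} (hy : γH y = none) :
    sumLabeling γG γH (x, y) = none := by
  simp [sumLabeling, hy]

theorem sumRank_of_eq_some {K : ℕ} {x : G.V} {y : H.V} {a b : ℕ} (ha : γG x = some a)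
    (hb : γH y = some b) : sumRank γG γH cG cH K (x, y) = (a + b) * K + (cG x + cH y) := by
  simp [sumRank, ha, hb]

theorem exitsOf_sum_of_snd_eq_none {x : G.V} {y : H.V} {a : ℕ} (hx : γG x = some a)
    (hy : γH y = none) :
    (G.sum H).exitsOf (sumLabeling γG γH) (x, y) = (a ^^^ ·) '' H.exitsOf γH y := by
  ext k
  constructor
  · rintro ⟨⟨x', y'⟩, ⟨-, rfl⟩ | ⟨hyy', rfl⟩, hk⟩
    · rw [sumLabeling_of_snd_eq_none hy] at hk
      cases hk
    · obtain ⟨a', b, ha', hb, rfl⟩ := sumLabeling_eq_some_iff.1 hk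
      rw [hx] at ha'
      cases ha'
      exact ⟨b, ⟨y', hyy', hb⟩, rfl⟩
  · rintro ⟨b, ⟨y', hyy', hb⟩, rfl⟩
    exact ⟨(x, y'), .inr ⟨hyy', rfl⟩, sumLabeling_of_eq_some hx hb⟩

theorem sumLabeling_ne_of_adj (hG : G.IsGrundyLabeling γG cG) (hH : H.IsGrundyLabeling γH cH)
    {p q : G.V × H.V} {m : ℕ} (hp : sumLabeling γG γH p = some m)
    (hpq : (G.sum H).adj p q) : sumLabeling γG γH q ≠ some m := by
  obtain ⟨x, y⟩ := p
  obtain ⟨x', y'⟩ := q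
  obtain ⟨a, b, ha, hb, rfl⟩ := sumLabeling_eq_some_iff.1 hp
  intro hq
  obtain ⟨a', b', ha', hb', he⟩ := sumLabeling_eq_some_iff.1 hq
  rcases hpq with ⟨hxx', rfl⟩ | ⟨hyy', rfl⟩
  · rw [hb] at hb'
    cases hb'
    exact hG.ne_of_adj ha hxx' (Nat.xor_left_inj.1 he ▸ ha')
  · rw [ha] at ha'
    cases ha'
    exact hH.ne_of_adj hb hyy' (Nat.xor_right_inj.1 he ▸ hb')

theorem sum_exists_adj_lt {K : ℕ} (hG : G.IsGrundyLabeling γG cG)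
    (hH : H.IsGrundyLabeling γH cH) (hK : ∀ x y, cG x + cH y < K) {p : G.V × H.V} {m k : ℕ}
    (hp : sumLabeling γG γH p = some m) (hk : k < m) :
    ∃ q, (G.sum H).adj p q ∧ sumLabeling γG γH q = some k ∧
      sumRank γG γH cG cH K q < sumRank γG γH cG cH K p := by
  obtain ⟨x, y⟩ := p
  obtain ⟨a, b, ha, hb, rfl⟩ := sumLabeling_eq_some_iff.1 hp
  rw [sumRank_of_eq_some ha hb]
  rcases Nat.lt_xor_cases hk with hka | hkb
  · obtain ⟨x', hxx', hx', -⟩ := hG.exists_adj_lt ha hka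
    refine ⟨(x', y), .inl ⟨hxx', rfl⟩, by simp [sumLabeling_of_eq_some hx' hb], ?_⟩
    rw [sumRank_of_eq_some hx' hb]
    exact Nat.mul_add_lt_mul_add (by omega) (hK _ _)
  · obtain ⟨y', hyy', hy', -⟩ := hH.exists_adj_lt hb hkb
    refine ⟨(x, y'), .inr ⟨hyy', rfl⟩, by simp [sumLabeling_of_eq_some ha hy', Nat.xor_comm k], ?_⟩
    rw [sumRank_of_eq_some ha hy']
    exact Nat.mul_add_lt_mul_add (by omega) (hK _ _)

theorem sum_exists_revert_of_adj_fst {K : ℕ} (hG : G.IsGrundyLabeling γG cG)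
    (hH : H.IsGrundyLabeling γH cH) (hK : ∀ x y, cG x + cH y < K) {x x' : G.V} {y : H.V}
    {m : ℕ} (hp : sumLabeling γG γH (x, y) = some m) (hxx' : G.adj x x')
    (hgt : ∀ k, sumLabeling γG γH (x', y) = some k → m < k) :
    ∃ z, (G.sum H).adj (x', y) z ∧ sumLabeling γG γH z = some m ∧
      sumRank γG γH cG cH K z < sumRank γG γH cG cH K (x, y) := by
  obtain ⟨a, b, ha, hb, rfl⟩ := sumLabeling_eq_some_iff.1 hp
  rw [sumRank_of_eq_some ha hb]
  rcases hG.lt_or_forall_gt ha hxx' with ⟨a', ha'a, ha'⟩ | hgt'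
  · -- `a' < a` yet `a ^^^ b < a' ^^^ b`, so the answer lowers `b` as well and the label sum drops
    have hlt : a ^^^ b < a' ^^^ b := hgt _ (sumLabeling_of_eq_some ha' hb)
    have hb' : a ^^^ b ^^^ a' < b := (Nat.lt_xor_cases hlt).resolve_left (by
      rw [Nat.xor_xor_cancel_right]
      omega)
    obtain ⟨y', hyy', hy', -⟩ := hH.exists_adj_lt hb hb'
    refine ⟨(x', y'), .inr ⟨hyy', rfl⟩, ?_, ?_⟩
    · rw [sumLabeling_of_eq_some ha' hy', Nat.xor_comm (a ^^^ b), Nat.xor_xor_cancel_left]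
    · rw [sumRank_of_eq_some ha' hy']
      exact Nat.mul_add_lt_mul_add (by omega) (hK _ _)
  · obtain ⟨x'', hx'x'', hx'', hc⟩ := hG.exists_revert ha hxx' hgt'
    refine ⟨(x'', y), .inl ⟨hx'x'', rfl⟩, sumLabeling_of_eq_some hx'' hb, ?_⟩
    rw [sumRank_of_eq_some hx'' hb]
    omega

theorem sum_exists_revert {K : ℕ} (hG : G.IsGrundyLabeling γG cG)
    (hH : H.IsGrundyLabeling γH cH) (hK : ∀ x y, cG x + cH y < K) {p q : G.V × H.V} {m : ℕ}
    (hp : sumLabeling γG γH p = some m) (hpq : (G.sum H).adj p q)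
    (hgt : ∀ k, sumLabeling γG γH q = some k → m < k) :
    ∃ z, (G.sum H).adj q z ∧ sumLabeling γG γH z = some m ∧
      sumRank γG γH cG cH K z < sumRank γG γH cG cH K p := by
  obtain ⟨x, y⟩ := p
  obtain ⟨x', y'⟩ := q
  rcases hpq with ⟨hxx', rfl⟩ | ⟨hyy', rfl⟩
  · exact sum_exists_revert_of_adj_fst hG hH hK hp hxx' hgt
  · obtain ⟨z, hz, hzm, hzc⟩ := sum_exists_revert_of_adj_fst hH hG
      (fun y x => add_comm (cH y) (cG x) ▸ hK x y) ((sumLabeling_swap γG γH _).trans hp) hyy'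
      fun k hk => hgt k ((sumLabeling_swap γG γH _).symm.trans hk)
    refine ⟨z.swap, sum_adj_swap.1 hz, (sumLabeling_swap γH γG z).trans hzm, ?_⟩
    exact (sumRank_swap γH γG cH cG K z).trans_lt (hzc.trans_eq (sumRank_swap γG γH cG cH K _))

theorem sumLabeling_ne_of_adj_of_snd_eq_none {x : G.V} {y : H.V} {μ : ℕ} (hy : γH y = none)
    (h : ∀ a, γG x = some a → ∀ y', H.adj y y' → γH y' ≠ some (a ^^^ μ)) :
    ∀ r, (G.sum H).adj (x, y) r → sumLabeling γG γH r ≠ some μ := by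
  rintro ⟨x', y'⟩ (⟨-, rfl⟩ | ⟨hyy', rfl⟩) hr
  · rw [sumLabeling_of_snd_eq_none hy] at hr
    cases hr
  · obtain ⟨a, b, ha, hb, rfl⟩ := sumLabeling_eq_some_iff.1 hr
    exact h a ha y' hyy' (by rwa [Nat.xor_xor_cancel_left])

theorem sum_exists_escape_of_snd_eq_none (hG : G.IsGrundyLabeling γG cG)
    (hH : H.IsGrundyLabeling γH cH) {x : G.V} {y : H.V} (hy : γH y = none) :
    ∃ q, (G.sum H).adj (x, y) q ∧ sumLabeling γG γH q = none ∧
      ∀ r, (G.sum H).adj q r →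
        sumLabeling γG γH r ≠ some (mex ((G.sum H).exitsOf (sumLabeling γG γH) (x, y))) := by
  cases hx : γG x with
  | none =>
    obtain ⟨y', hyy', hy', -⟩ := hH.exists_escape hy
    exact ⟨(x, y'), .inr ⟨hyy', rfl⟩, sumLabeling_of_snd_eq_none hy',
      sumLabeling_ne_of_adj_of_snd_eq_none hy' (by simp [hx])⟩
  | some a =>
    rw [exitsOf_sum_of_snd_eq_none hx hy]
    rcases xor_mex_image_eq_or_lt a (H.exitsOf_finite γH y) with h | h
    · obtain ⟨y', hyy', hy', hy'ne⟩ := hH.exists_escape hy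
      refine ⟨(x, y'), .inr ⟨hyy', rfl⟩, sumLabeling_of_snd_eq_none hy',
        sumLabeling_ne_of_adj_of_snd_eq_none hy' ?_⟩
      rintro a' ha'
      rw [hx] at ha'
      cases ha'
      rw [h]
      exact hy'ne
    · obtain ⟨x', hxx', hx', -⟩ := hG.exists_adj_lt hx h
      refine ⟨(x', y), .inl ⟨hxx', rfl⟩, sumLabeling_of_snd_eq_none hy,
        sumLabeling_ne_of_adj_of_snd_eq_none hy ?_⟩
      rintro a' ha' y' hyy' hy'
      rw [hx'] at ha'
      cases ha'
      rw [Nat.xor_comm, Nat.xor_xor_cancel_left] at hy'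
      exact mex_notMem (H.exitsOf_finite γH y) ⟨y', hyy', hy'⟩

theorem sum_exists_escape (hG : G.IsGrundyLabeling γG cG) (hH : H.IsGrundyLabeling γH cH)
    {p : G.V × H.V} (hp : sumLabeling γG γH p = none) :
    ∃ q, (G.sum H).adj p q ∧ sumLabeling γG γH q = none ∧
      ∀ r, (G.sum H).adj q r →
        sumLabeling γG γH r ≠ some (mex ((G.sum H).exitsOf (sumLabeling γG γH) p)) := by
  obtain ⟨x, y⟩ := p
  cases hy : γH y with
  | none => exact sum_exists_escape_of_snd_eq_none hG hH hy
  | some b =>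
    have hx : γG x = none := by simpa [sumLabeling, hy] using hp
    obtain ⟨q, hq, hqn, hqr⟩ := sum_exists_escape_of_snd_eq_none hH hG (x := y) hx
    have hμ : (H.sum G).exitsOf (sumLabeling γH γG) (y, x) =
        (G.sum H).exitsOf (sumLabeling γG γH) (x, y) := exitsOf_sum_swap γG γH (x, y)
    rw [hμ] at hqr
    refine ⟨q.swap, sum_adj_swap.1 hq, (sumLabeling_swap γH γG q).trans hqn, fun r hr => ?_⟩
    rw [← sumLabeling_swap γG γH r]
    exact hqr r.swap (sum_adj_swap.2 hr)

theorem isGrundyLabeling_sum {K : ℕ} (hG : G.IsGrundyLabeling γG cG)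
    (hH : H.IsGrundyLabeling γH cH) (hK : ∀ x y, cG x + cH y < K) :
    (G.sum H).IsGrundyLabeling (sumLabeling γG γH) (sumRank γG γH cG cH K) where
  ne_of_adj _ _ _ := sumLabeling_ne_of_adj hG hH
  exists_adj_lt _ _ _ := sum_exists_adj_lt hG hH hK
  exists_revert _ _ _ := sum_exists_revert hG hH hK
  exists_escape _ := sum_exists_escape hG hH

theorem smith_sum (G H : CycGame) : (G.sum H).smith = sumLabeling G.smith H.smith := by
  have := G.finite
  have := H.finite
  obtain ⟨KG, hKG⟩ := (Set.finite_range G.stage).bddAbove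
  obtain ⟨KH, hKH⟩ := (Set.finite_range H.stage).bddAbove
  have hK : ∀ x y, G.stage x + H.stage y < KG + KH + 1 := fun x y => by
    have := hKG ⟨x, rfl⟩
    have := hKH ⟨y, rfl⟩
    omega
  exact (G.sum H).isGrundyLabeling_smith.unique
    (isGrundyLabeling_sum G.isGrundyLabeling_smith H.isGrundyLabeling_smith hK)

end CycGame

/-- If `G` has finite Grundy value `m` and `H` lies in a cyclic zone with
Grundy value `∞_D`, then `G + H` has Grundy value `∞_{m ⊕ D}`: it is in a
cyclic zone and its exit set is `m ⊕ D`.  Consequently `G + H` is an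
N-position iff `m ∈ D`. -/
theorem sum_finite_cyclic (G H : CycGame) (x : G.V) (y : H.V) (m : ℕ)
    (hG : G.smith x = some m) (hH : H.smith y = none) :
    (G.sum H).smith (x, y) = none ∧
    (G.sum H).exits (x, y) = (fun d => m ^^^ d) '' H.exits y ∧
    ((G.sum H).NPos (x, y) ↔ m ∈ H.exits y) := by
  have hexits : (G.sum H).exits (x, y) = (fun d => m ^^^ d) '' H.exits y := by
    change (G.sum H).exitsOf (G.sum H).smith (x, y) = _
    rw [CycGame.smith_sum]
    exact CycGame.exitsOf_sum_of_snd_eq_none hG hH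
  refine ⟨by rw [CycGame.smith_sum]; exact CycGame.sumLabeling_of_snd_eq_none hH, hexits,
    (G.sum H).isGrundyLabeling_smith.nPos_iff.trans ?_⟩
  change 0 ∈ (G.sum H).exits (x, y) ↔ _
  rw [hexits]
  exact ⟨fun ⟨d, hd, h0⟩ => Nat.xor_eq_zero_iff.1 h0 ▸ hd, fun hm => ⟨m, hm, Nat.xor_self m⟩⟩
end
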